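/- Let n ≥ 1, let X, X̂ ∈ ℝ^{n×n}, set ξ = X − X̂, let B : ℝ^{n×n} → ℝ be any function and b ∈ ℝ. Define the set of achievable original objective values A = { ‖X − f_d(f_e(X))‖_F : f_e, f_d : ℝ^{n×n} → ℝ^{n×n}, B(f_e(X)) ≤ b, and 0 ≤ f_d(f_e(X)) ≤ 1 entrywise }, and the set of achievable reparameterized objective values A' = { ‖ξ − g_e(ξ)‖_F + ‖g_e(ξ) − g_d(g_e(ξ))‖_F : g_e, g_d : ℝ^{n×n} → ℝ^{n×n}, B(g_e(ξ)) ≤ b, and 0 ≤ X̂ + g_d(g_e(ξ)) ≤ 1 entrywise }. If A' is nonempty, then A is nonempty and inf A ≤ inf A' (infima taken in ℝ; both sets are bounded below by 0). -/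
import Mathlib


/-- Frobenius norm of a real `n × n` matrix. -/
noncomputable def frobNorm {n : ℕ} (A : Matrix (Fin n) (Fin n) ℝ) : ℝ :=
  Real.sqrt (∑ i, ∑ j, (A i j) ^ 2)

lemma frobNorm_eq {n : ℕ} (A : Matrix (Fin n) (Fin n) ℝ) :
    frobNorm A = ‖(WithLp.equiv 2 (Fin n × Fin n → ℝ)).symm (fun p => A p.1 p.2)‖ := by
  rw [EuclideanSpace.norm_eq, frobNorm]
  congr 1
  rw [Fintype.sum_prod_type]
  simp [Real.norm_eq_abs, sq_abs]

lemma frobNorm_nonneg {n : ℕ} (A : Matrix (Fin n) (Fin n) ℝ) : 0 ≤ frobNorm A :=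
  Real.sqrt_nonneg _

lemma frobNorm_triangle {n : ℕ} (A C D : Matrix (Fin n) (Fin n) ℝ) :
    frobNorm (A - D) ≤ frobNorm (A - C) + frobNorm (C - D) := by
  rw [frobNorm_eq, frobNorm_eq, frobNorm_eq]
  have : ((WithLp.equiv 2 (Fin n × Fin n → ℝ)).symm (fun p => (A - D) p.1 p.2) :
      EuclideanSpace ℝ (Fin n × Fin n)) =
      (WithLp.equiv 2 (Fin n × Fin n → ℝ)).symm (fun p => (A - C) p.1 p.2) +
      (WithLp.equiv 2 (Fin n × Fin n → ℝ)).symm (fun p => (C - D) p.1 p.2) := by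
    ext p
    simp [Matrix.sub_apply]
  rw [this]
  exact norm_add_le _ _

theorem stmt_1 {n : ℕ} (hn : 1 ≤ n) (X Xhat : Matrix (Fin n) (Fin n) ℝ)
    (ξ : Matrix (Fin n) (Fin n) ℝ) (hξ : ξ = X - Xhat)
    (B : Matrix (Fin n) (Fin n) ℝ → ℝ) (b : ℝ)
    (A A' : Set ℝ)
    (hA : A = { d | ∃ fe fd : Matrix (Fin n) (Fin n) ℝ → Matrix (Fin n) (Fin n) ℝ,
        B (fe X) ≤ b ∧
        (∀ i j, 0 ≤ fd (fe X) i j ∧ fd (fe X) i j ≤ 1) ∧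
        d = frobNorm (X - fd (fe X)) })
    (hA' : A' = { d | ∃ ge gd : Matrix (Fin n) (Fin n) ℝ → Matrix (Fin n) (Fin n) ℝ,
        B (ge ξ) ≤ b ∧
        (∀ i j, 0 ≤ Xhat i j + gd (ge ξ) i j ∧ Xhat i j + gd (ge ξ) i j ≤ 1) ∧
        d = frobNorm (ξ - ge ξ) + frobNorm (ge ξ - gd (ge ξ)) })
    (hne : A'.Nonempty) :
    A.Nonempty ∧ sInf A ≤ sInf A' := by
  -- key: for every a' ∈ A', there is a ∈ A with a ≤ a'
  have key : ∀ a' ∈ A', ∃ a ∈ A, a ≤ a' := by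
    intro a' ha'
    rw [hA'] at ha'
    obtain ⟨ge, gd, hB, hbox, hval⟩ := ha'
    refine ⟨frobNorm (X - (Xhat + gd (ge ξ))), ?_, ?_⟩
    · rw [hA]
      refine ⟨fun z => ge (z - Xhat), fun y => Xhat + gd y, ?_, ?_, ?_⟩
      · rw [hξ] at hB; exact hB
      · intro i j
        have := hbox i j
        simpa [hξ, Matrix.add_apply] using this
      · rw [hξ]
    · have : X - (Xhat + gd (ge ξ)) = ξ - gd (ge ξ) := by
        rw [hξ]; abel
      rw [this, hval]
      exact frobNorm_triangle ξ (ge ξ) (gd (ge ξ))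
  obtain ⟨a', ha'⟩ := hne
  obtain ⟨a, haA, _⟩ := key a' ha'
  have hAne : A.Nonempty := ⟨a, haA⟩
  refine ⟨hAne, ?_⟩
  -- A is bounded below by 0
  have hbdd : BddBelow A := by
    refine ⟨0, fun x hx => ?_⟩
    rw [hA] at hx
    obtain ⟨fe, fd, _, _, hval⟩ := hx
    rw [hval]; exact frobNorm_nonneg _
  apply le_csInf ⟨a', ha'⟩
  intro x hx
  obtain ⟨y, hyA, hyx⟩ := key x hx
  exact le_trans (csInf_le hbdd hyA) hyx
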